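/- (Proposition 6.4, recursive form) For every n ≥ 1, the set of 2-Brauer relations of rank n is finite and its cardinality equals M(n), the n-th Motzkin number. -/

import Mathlib

/-!
Sort the noncrossing involutions `σ` of a finite linear order by the partner `c = σ ⊥` of its
least point. A point strictly between `⊥` and `c` cannot be matched beyond `c` without crossing
the arc `⊥ ↔ c`, so `σ` restricts to noncrossing involutions of `Ioo ⊥ c` and of `Ioi c`; and
any two such involutions glue back, together with the arc, to one of the whole order. For the
number `C n` of noncrossing involutions of `Fin n` this gives
`C (n + 1) = ∑ j, C (j - 1) * C (n - j)`; for `n + 2` points the term `j = 0` (`⊥` fixed) is the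
summand `C (n + 1)` of Motzkin's recurrence and the others form its convolution.
For `n ≥ 1`, `ZMod n` is `Fin n`, so 2-Brauer relations of rank `n` are exactly these involutions.
-/

/-- The Motzkin numbers: `M 0 = 1`, `M 1 = 1` and, for `n ≥ 2`,
`M n = M (n-1) + ∑_{i=0}^{n-2} M i * M (n-2-i)`. -/
def motzkin : ℕ → ℕ
  | 0 => 1
  | 1 => 1
  | n + 2 =>
      motzkin (n + 1) +
        ∑ i ∈ (Finset.range (n + 1)).attach, motzkin i.1 * motzkin (n - i.1)
decreasing_by
  all_goals
    first
      | omega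
      | (have h := Finset.mem_range.mp i.2; omega)

/-- A `2`-Brauer relation of rank `n`: an involution `σ` of `ZMod n` which is
noncrossing with respect to the circular placement of `ZMod n` (ordered by
the value map `ZMod.val`). -/
def IsTwoBrauer (n : ℕ) (σ : ZMod n → ZMod n) : Prop :=
  Function.Involutive σ ∧
    ¬ ∃ i j : ZMod n, i.val < j.val ∧ j.val < (σ i).val ∧ (σ i).val < (σ j).val

open Set

variable {α β : Type*} [LinearOrder α] [LinearOrder β]

structure IsNoncrossingInvolution (σ : α → α) : Prop where
  involutive : Function.Involutive σ
  not_crossing : ∀ ⦃i j⦄, i < j → j < σ i → σ i < σ j → False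

namespace IsNoncrossingInvolution

variable {σ : α → α}

theorem restrict (hσ : IsNoncrossingInvolution σ) {s : Set α} (h : MapsTo σ s s) :
    IsNoncrossingInvolution (h.restrict σ s s) where
  involutive x := Subtype.ext (hσ.involutive x)
  not_crossing _ _ hij hji hjj := hσ.not_crossing hij hji hjj

theorem conj (hσ : IsNoncrossingInvolution σ) (e : α ≃o β) :
    IsNoncrossingInvolution (e ∘ σ ∘ e.symm) where
  involutive x := by simp [hσ.involutive (e.symm x)]
  not_crossing i j hij hji hjj := by
    simp only [Function.comp_apply] at hji hjj
    exact hσ.not_crossing (e.symm.lt_iff_lt.2 hij) (e.symm_apply_lt.2 hji) (e.lt_iff_lt.1 hjj)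

end IsNoncrossingInvolution

def noncrossingInvolutionsCongr (e : α ≃o β) :
    {σ : α → α // IsNoncrossingInvolution σ} ≃ {τ : β → β // IsNoncrossingInvolution τ} :=
  (e.toEquiv.arrowCongr e.toEquiv).subtypeEquiv fun σ =>
    ⟨fun h => h.conj e, fun h => by simpa [Function.comp_def] using h.conj e.symm⟩

noncomputable def noncrossingInvolutionCount (n : ℕ) : ℕ :=
  Nat.card {σ : Fin n → Fin n // IsNoncrossingInvolution σ}

theorem card_noncrossingInvolutions [Finite α] :
    Nat.card {σ : α → α // IsNoncrossingInvolution σ} =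
      noncrossingInvolutionCount (Nat.card α) := by
  have := Fintype.ofFinite α
  exact Nat.card_congr <| noncrossingInvolutionsCongr
    (Fintype.orderIsoFinOfCardEq α Nat.card_eq_fintype_card.symm).symm

section BotArc

variable [OrderBot α]

theorem eq_bot_or_mem_Ioo_or_eq_or_mem_Ioi (c x : α) :
    x = ⊥ ∨ x ∈ Ioo ⊥ c ∨ x = c ∨ x ∈ Ioi c := by
  rcases eq_bot_or_bot_lt x with hx | hx
  · exact Or.inl hx
  rcases lt_trichotomy x c with hxc | hxc | hxc
  exacts [Or.inr (Or.inl ⟨hx, hxc⟩), Or.inr (Or.inr (Or.inl hxc)), Or.inr (Or.inr (Or.inr hxc))]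

namespace IsNoncrossingInvolution

variable {σ : α → α} {c : α}

theorem mapsTo_Ioo (hσ : IsNoncrossingInvolution σ) (hc : σ ⊥ = c) :
    MapsTo σ (Ioo ⊥ c) (Ioo ⊥ c) := by
  subst hc
  rintro x ⟨hx, hxc⟩
  refine ⟨bot_lt_iff_ne_bot.2 fun h => hxc.ne ?_,
    lt_of_le_of_ne (not_lt.1 (hσ.not_crossing hx hxc)) fun h => hx.ne' (hσ.involutive.injective h)⟩
  rw [← h, hσ.involutive]

theorem mapsTo_Ioi (hσ : IsNoncrossingInvolution σ) (hc : σ ⊥ = c) :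
    MapsTo σ (Ioi c) (Ioi c) := by
  intro x hx
  rcases eq_bot_or_mem_Ioo_or_eq_or_mem_Ioi c (σ x) with h | h | h | h
  · exact absurd (hσ.involutive x ▸ h ▸ hc) hx.ne'
  · exact absurd (hσ.involutive x ▸ (hσ.mapsTo_Ioo hc h).2) (lt_asymm hx)
  · exact absurd (hσ.involutive.injective (h.trans hc.symm)) (ne_bot_of_gt hx)
  · exact h

end IsNoncrossingInvolution

/-- The points outside `Ioo ⊥ c ∪ Ioi c` are `⊥` and `c`, which are swapped (`⊥` is fixed when
`c = ⊥`). -/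
def botArc (c : α) (f : Ioo ⊥ c → Ioo ⊥ c) (g : Ioi c → Ioi c) (x : α) : α :=
  if hx : x ∈ Ioo ⊥ c then f ⟨x, hx⟩
  else if hx' : x ∈ Ioi c then g ⟨x, hx'⟩
  else if x = ⊥ then c else ⊥

variable {c x : α} {f : Ioo ⊥ c → Ioo ⊥ c} {g : Ioi c → Ioi c}

theorem botArc_of_mem_Ioo (hx : x ∈ Ioo ⊥ c) : botArc c f g x = f ⟨x, hx⟩ := dif_pos hx

theorem botArc_of_mem_Ioi (hx : x ∈ Ioi c) : botArc c f g x = g ⟨x, hx⟩ := by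
  rw [botArc, dif_neg fun h => lt_asymm h.2 hx, dif_pos hx]

theorem botArc_bot : botArc c f g ⊥ = c := by
  simp [botArc]

theorem botArc_self : botArc c f g c = ⊥ := by
  simp only [botArc, mem_Ioo, lt_irrefl, and_false, mem_Ioi, dite_false]
  split_ifs with h <;> simp [h]

theorem IsNoncrossingInvolution.botArc (hf : IsNoncrossingInvolution f)
    (hg : IsNoncrossingInvolution g) : IsNoncrossingInvolution (botArc c f g) where
  involutive x := by
    rcases eq_bot_or_mem_Ioo_or_eq_or_mem_Ioi c x with rfl | hx | rfl | hx
    · rw [botArc_bot, botArc_self]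
    · rw [botArc_of_mem_Ioo hx, botArc_of_mem_Ioo (f _).2]
      exact congrArg Subtype.val (hf.involutive ⟨x, hx⟩)
    · rw [botArc_self, botArc_bot]
    · rw [botArc_of_mem_Ioi hx, botArc_of_mem_Ioi (g _).2]
      exact congrArg Subtype.val (hg.involutive ⟨x, hx⟩)
  not_crossing i j hij hji hjj := by
    rcases eq_bot_or_mem_Ioo_or_eq_or_mem_Ioi c i with rfl | hi | rfl | hi
    · rw [botArc_bot] at hji hjj
      rw [botArc_of_mem_Ioo ⟨hij, hji⟩] at hjj
      exact lt_asymm hjj (f _).2.2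
    · rw [botArc_of_mem_Ioo hi] at hji hjj
      have hj : j ∈ Ioo ⊥ c := ⟨hi.1.trans hij, hji.trans (f _).2.2⟩
      rw [botArc_of_mem_Ioo hj] at hjj
      exact hf.not_crossing (i := ⟨i, hi⟩) (j := ⟨j, hj⟩) hij hji hjj
    · rw [botArc_self] at hji
      exact not_lt_bot hji
    · have hj : j ∈ Ioi c := lt_trans hi hij
      rw [botArc_of_mem_Ioi hi] at hji hjj
      rw [botArc_of_mem_Ioi hj] at hjj
      exact hg.not_crossing (i := ⟨i, hi⟩) (j := ⟨j, hj⟩) hij hji hjj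

theorem botArc_restrict {σ : α → α} (hσ : IsNoncrossingInvolution σ)
    (hc : σ ⊥ = c) :
    botArc c ((hσ.mapsTo_Ioo hc).restrict σ _ _) ((hσ.mapsTo_Ioi hc).restrict σ _ _) = σ := by
  funext x
  rcases eq_bot_or_mem_Ioo_or_eq_or_mem_Ioi c x with rfl | hx | rfl | hx
  · rw [botArc_bot, hc]
  · rw [botArc_of_mem_Ioo hx]; rfl
  · rw [botArc_self, ← hc, hσ.involutive]
  · rw [botArc_of_mem_Ioi hx]; rfl

def botPartnerEquiv (c : α) :
    {σ : {σ : α → α // IsNoncrossingInvolution σ} // σ.1 ⊥ = c} ≃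
      {f : Ioo ⊥ c → Ioo ⊥ c // IsNoncrossingInvolution f} ×
        {g : Ioi c → Ioi c // IsNoncrossingInvolution g} where
  toFun σ := (⟨_, σ.1.2.restrict (σ.1.2.mapsTo_Ioo σ.2)⟩, ⟨_, σ.1.2.restrict (σ.1.2.mapsTo_Ioi σ.2)⟩)
  invFun p := ⟨⟨botArc c p.1.1 p.2.1, p.1.2.botArc p.2.2⟩, botArc_bot⟩
  left_inv σ := Subtype.ext <| Subtype.ext <| botArc_restrict σ.1.2 σ.2
  right_inv _ := Prod.ext (Subtype.ext <| funext fun x => Subtype.ext <| botArc_of_mem_Ioo x.2)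
    (Subtype.ext <| funext fun x => Subtype.ext <| botArc_of_mem_Ioi x.2)

theorem card_noncrossingInvolutions_eq_sum [Fintype α] :
    Nat.card {σ : α → α // IsNoncrossingInvolution σ} =
      ∑ c : α, noncrossingInvolutionCount (Nat.card (Ioo ⊥ c)) *
        noncrossingInvolutionCount (Nat.card (Ioi c)) := by
  rw [← Nat.card_congr (Equiv.sigmaFiberEquiv fun σ : {σ : α → α // IsNoncrossingInvolution σ} =>
    σ.1 ⊥), Nat.card_sigma]
  refine Finset.sum_congr rfl fun c _ => ?_
  rw [Nat.card_congr (botPartnerEquiv c), Nat.card_prod, card_noncrossingInvolutions,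
    card_noncrossingInvolutions]

end BotArc

theorem noncrossingInvolutionCount_zero : noncrossingInvolutionCount 0 = 1 :=
  Nat.card_eq_one_iff_unique.2
    ⟨inferInstance, ⟨⟨id, fun _ => rfl, fun _ _ hij hji _ => lt_asymm hij hji⟩⟩⟩

/-- `j - 1` and `n - j` are the sizes of `Ioo 0 j` and `Ioi j`; truncated subtraction makes the
first one correct also for `j = 0`. -/
theorem noncrossingInvolutionCount_succ (n : ℕ) :
    noncrossingInvolutionCount (n + 1) =
      ∑ j : Fin (n + 1), noncrossingInvolutionCount (j - 1) *
        noncrossingInvolutionCount (n - j) := by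
  rw [noncrossingInvolutionCount, card_noncrossingInvolutions_eq_sum]
  refine Finset.sum_congr rfl fun j _ => ?_
  simp only [Nat.card_eq_fintype_card, Fintype.card_Ioo, Fintype.card_Ioi, Fin.card_Ioo,
    Fin.card_Ioi, bot_eq_zero, Fin.val_zero]
  rfl

theorem noncrossingInvolutionCount_add_two (n : ℕ) :
    noncrossingInvolutionCount (n + 2) = noncrossingInvolutionCount (n + 1) +
      ∑ i ∈ Finset.range (n + 1), noncrossingInvolutionCount i *
        noncrossingInvolutionCount (n - i) := by
  rw [noncrossingInvolutionCount_succ, Fin.sum_univ_succ, ← Fin.sum_univ_eq_sum_range]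
  simp [noncrossingInvolutionCount_zero]

theorem noncrossingInvolutionCount_eq_motzkin (n : ℕ) :
    noncrossingInvolutionCount n = motzkin n := by
  induction n using Nat.strong_induction_on with
  | _ n ih =>
    match n with
    | 0 => rw [noncrossingInvolutionCount_zero, motzkin]
    | 1 => simp [noncrossingInvolutionCount_succ, noncrossingInvolutionCount_zero, motzkin]
    | n + 2 =>
      rw [noncrossingInvolutionCount_add_two, motzkin, Finset.sum_attach (Finset.range (n + 1))
        fun i => motzkin i * motzkin (n - i), ih (n + 1) (by omega)]
      refine congrArg _ (Finset.sum_congr rfl fun i hi => ?_)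
      rw [ih i (by simp at hi; omega), ih (n - i) (by omega)]

theorem isTwoBrauer_iff (n : ℕ) (σ : Fin (n + 1) → Fin (n + 1)) :
    IsTwoBrauer (n + 1) σ ↔ IsNoncrossingInvolution σ :=
  ⟨fun ⟨hσ, hnc⟩ => ⟨hσ, fun i j hij hji hjj => hnc ⟨i, j, hij, hji, hjj⟩⟩,
    fun ⟨hσ, hnc⟩ => ⟨hσ, fun ⟨_, _, hij, hji, hjj⟩ => hnc hij hji hjj⟩⟩

theorem card_twoBrauer_eq_motzkin (n : ℕ) (hn : 1 ≤ n) :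
    {σ : ZMod n → ZMod n | IsTwoBrauer n σ}.Finite ∧
      {σ : ZMod n → ZMod n | IsTwoBrauer n σ}.ncard = motzkin n := by
  obtain ⟨m, rfl⟩ : ∃ m, n = m + 1 := ⟨n - 1, by omega⟩
  have hset : {σ : ZMod (m + 1) → ZMod (m + 1) | IsTwoBrauer (m + 1) σ} =
      {σ : Fin (m + 1) → Fin (m + 1) | IsNoncrossingInvolution σ} :=
    Set.ext (isTwoBrauer_iff m)
  rw [hset, ← noncrossingInvolutionCount_eq_motzkin]
  exact ⟨Set.toFinite _, Nat.card_coe_set_eq _⟩
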